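/- arXiv:2601.17591 — 3 statements merged into one kernel-verified Lean document; each statement's English description precedes it below -/
import Mathlib

section
/- Let r > 0, t ∈ (0,1), let 𝒳 be a standard Borel space, let I be a finite index set, and for each i ∈ I let κ_i and η_i be Markov kernels from [0, r] to 𝒳 such that for Lebesgue-almost every y ∈ [0, r], κ_i(y) ≠ η_i(y). Define S(γ; t) := ⋃_{i ∈ I} {y ∈ [0, r] : φ_t(κ_i(y), η_i(y)) ≥ 1 − γ}. Then for every ε > 0 there exists γ > 0 such that the Lebesgue measure of S(γ; t) is less than ε. -/
/-! For `P ≠ Q`, strict Jensen for the strictly concave `x ↦ x ^ t`, applied to `dP/dQ` whose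
`Q`-integral is at most `1`, gives `φ_t(P, Q) < 1`: the equality case of Jensen would force
`dP/dQ = 1` a.e., hence `P = Q`. So for a.e. `y ∈ [0, r]` the finitely many values
`φ_t(κ i y, η i y)` are all `< 1`, the superlevel sets at level `1 - 1/(n+1)` decrease to a null
set, and continuity from above of Lebesgue measure on `[0, r]` makes them eventually smaller
than `ε`. -/

open MeasureTheory

/-- The Hellinger-type integral `φ_t(P,Q) = ∫ (dP/dQ)^t dQ`. -/
noncomputable def phiT {𝒳 : Type*} [MeasurableSpace 𝒳] (t : ℝ) (P Q : Measure 𝒳) : ℝ :=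
  ∫ x, (P.rnDeriv Q x).toReal ^ t ∂Q

open Filter Set ProbabilityTheory Topology

section Hellinger

variable {𝒳 : Type*} [MeasurableSpace 𝒳] {P Q : Measure 𝒳}

lemma MeasureTheory.Measure.integrable_toReal_rnDeriv_rpow [IsFiniteMeasure P] [IsFiniteMeasure Q] {t : ℝ}
    (ht₀ : 0 ≤ t) (ht₁ : t ≤ 1) : Integrable (fun x ↦ (P.rnDeriv Q x).toReal ^ t) Q := by
  have h_norm : ∀ x, ‖(P.rnDeriv Q x).toReal‖ = (P.rnDeriv Q x).toReal :=
    fun x ↦ Real.norm_of_nonneg ENNReal.toReal_nonneg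
  simpa only [h_norm] using integrable_norm_rpow_of_le
    (P.measurable_rnDeriv Q).ennreal_toReal.aestronglyMeasurable ht₀ zero_le_one ht₁
    (by simpa only [h_norm, Real.rpow_one] using Measure.integrable_toReal_rnDeriv)

lemma MeasureTheory.Measure.eq_of_toReal_rnDeriv_ae_eq_one [IsProbabilityMeasure P] [IsProbabilityMeasure Q]
    (h : ∀ᵐ x ∂Q, (P.rnDeriv Q x).toReal = 1) : P = Q := by
  have h_sing : (P.singularPart Q).real univ = 0 := by
    have := Measure.integral_toReal_rnDeriv' (μ := P) (ν := Q)
    simp only [integral_congr_ae h, integral_const, smul_eq_mul, mul_one,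
      probReal_univ] at this
    linarith
  have hPQ : P ≪ Q := by
    rwa [← Measure.singularPart_eq_zero, ← Measure.measure_univ_eq_zero,
      ← measureReal_eq_zero_iff]
  refine (Measure.rnDeriv_eq_one_iff_eq hPQ).mp ?_
  filter_upwards [h] with x hx using (ENNReal.toReal_eq_one_iff _).mp hx

lemma phiT_lt_one [IsProbabilityMeasure P] [IsProbabilityMeasure Q] {t : ℝ}
    (ht : t ∈ Ioo (0 : ℝ) 1) (h : P ≠ Q) : phiT t P Q < 1 := by
  set f : 𝒳 → ℝ := fun x ↦ (P.rnDeriv Q x).toReal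
  have h_int_le : ∫ x, f x ∂Q ≤ 1 := by
    rw [Measure.integral_toReal_rnDeriv', probReal_univ]
    linarith [measureReal_nonneg (μ := P.singularPart Q) (s := univ)]
  have h_int_nonneg : 0 ≤ ∫ x, f x ∂Q := integral_nonneg fun _ ↦ ENNReal.toReal_nonneg
  rcases (Real.strictConcaveOn_rpow ht.1 ht.2).ae_eq_const_or_lt_map_average
      (Real.continuous_rpow_const ht.1.le).continuousOn isClosed_Ici
      (ae_of_all Q fun _ ↦ ENNReal.toReal_nonneg) Measure.integrable_toReal_rnDeriv
      (Measure.integrable_toReal_rnDeriv_rpow (P := P) ht.1.le ht.2.le) with h_const | h_jensen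
  · rw [average_eq_integral] at h_const
    have h_lt : ∫ x, f x ∂Q < 1 := by
      refine h_int_le.lt_of_ne fun h_one ↦ h (Measure.eq_of_toReal_rnDeriv_ae_eq_one ?_)
      filter_upwards [h_const] with x hx using hx.trans h_one
    calc phiT t P Q = ∫ _, (∫ x, f x ∂Q) ^ t ∂Q := integral_congr_ae (h_const.fun_comp (· ^ t))
      _ = (∫ x, f x ∂Q) ^ t := by simp
      _ < 1 := Real.rpow_lt_one h_int_nonneg h_lt ht.1
  · rw [average_eq_integral, average_eq_integral] at h_jensen
    calc phiT t P Q < (∫ x, f x ∂Q) ^ t := h_jensen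
      _ ≤ 1 := Real.rpow_le_one h_int_nonneg h_int_le ht.1.le

end Hellinger

lemma measurable_phiT {α 𝒳 : Type*} [MeasurableSpace α] [MeasurableSpace 𝒳]
    [MeasurableSpace.CountableOrCountablyGenerated α 𝒳] (t : ℝ) (κ η : Kernel α 𝒳)
    [IsFiniteKernel κ] [IsFiniteKernel η] :
    Measurable fun a ↦ phiT t (κ a) (η a) := by
  have h_eq : (fun a ↦ phiT t (κ a) (η a))
      = fun a ↦ ∫ x, (κ.rnDeriv η a x).toReal ^ t ∂(η a) := by
    ext a
    refine integral_congr_ae ?_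
    filter_upwards [κ.rnDeriv_eq_rnDeriv_measure (η := η) (a := a)] with x hx
    rw [hx]
  rw [h_eq]
  have h_meas : Measurable fun p : α × 𝒳 ↦ (κ.rnDeriv η p.1 p.2).toReal ^ t :=
    (κ.measurable_rnDeriv η).ennreal_toReal.pow_const t
  exact h_meas.stronglyMeasurable.integral_kernel_prod_right'.measurable

lemma tendsto_measure_setOf_sub_le_of_ae_lt {α : Type*} [MeasurableSpace α] {μ : Measure α}
    {s : Set α} {g : α → ℝ} {c : ℝ} (hs : MeasurableSet s) (hμs : μ s ≠ ⊤) (hg : Measurable g)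
    (h_lt : ∀ᵐ y ∂μ.restrict s, g y < c) :
    Tendsto (fun n : ℕ ↦ μ {y ∈ s | c - 1 / ((n : ℝ) + 1) ≤ g y}) atTop (𝓝 0) := by
  set S : ℕ → Set α := fun n ↦ {y ∈ s | c - 1 / ((n : ℝ) + 1) ≤ g y}
  have h_anti : Antitone S := fun m n hmn y hy ↦ ⟨hy.1, le_trans (by gcongr) hy.2⟩
  have h_inter : ⋂ n, S n ⊆ {y | ¬(y ∈ s → g y < c)} := by
    intro y hy h_imp
    obtain ⟨n, hn⟩ := exists_nat_one_div_lt (sub_pos.mpr (h_imp (mem_iInter.mp hy 0).1))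
    linarith [(mem_iInter.mp hy n).2]
  have h_null : μ (⋂ n, S n) = 0 :=
    measure_mono_null h_inter (ae_iff.mp ((ae_restrict_iff' hs).mp h_lt))
  rw [← h_null]
  exact tendsto_measure_iInter_atTop
    (fun n ↦ (hs.inter (measurableSet_le measurable_const hg)).nullMeasurableSet) h_anti
    ⟨0, ne_top_of_le_ne_top hμs (measure_mono (sep_subset _ _))⟩

theorem stmt_2_general {𝒳 : Type*} [MeasurableSpace 𝒳] [StandardBorelSpace 𝒳]
    (r t : ℝ) (ht : t ∈ Set.Ioo (0 : ℝ) 1)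
    {I : Type*} [Fintype I]
    (κ η : I → ProbabilityTheory.Kernel ℝ 𝒳)
    [∀ i, ProbabilityTheory.IsMarkovKernel (κ i)]
    [∀ i, ProbabilityTheory.IsMarkovKernel (η i)]
    (hne : ∀ i, ∀ᵐ y ∂(volume.restrict (Set.Icc (0 : ℝ) r)), κ i y ≠ η i y) :
    ∀ ε : ℝ, 0 < ε → ∃ γ : ℝ, 0 < γ ∧
      volume (⋃ i, {y ∈ Set.Icc (0 : ℝ) r | 1 - γ ≤ phiT t (κ i y) (η i y)})
        < ENNReal.ofReal ε := by
  intro ε hε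
  have h_tendsto : ∀ i, Tendsto (fun n : ℕ ↦ volume
      {y ∈ Icc (0 : ℝ) r | 1 - 1 / ((n : ℝ) + 1) ≤ phiT t (κ i y) (η i y)}) atTop (𝓝 0) :=
    fun i ↦ tendsto_measure_setOf_sub_le_of_ae_lt measurableSet_Icc measure_Icc_lt_top.ne
      (measurable_phiT t (κ i) (η i))
      (by filter_upwards [hne i] with y hy using phiT_lt_one ht hy)
  have h_sum := tendsto_finsetSum Finset.univ fun i _ ↦ h_tendsto i
  rw [Finset.sum_const_zero] at h_sum
  obtain ⟨n, hn⟩ := (h_sum.eventually_lt_const (ENNReal.ofReal_pos.mpr hε)).exists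
  exact ⟨1 / ((n : ℝ) + 1), by positivity, (measure_iUnion_fintype_le _ _).trans_lt hn⟩

/-- If for each `i` in a finite index set the Markov kernels `κ i` and `η i` from `[0,r]` to a
standard Borel space satisfy `κ i y ≠ η i y` for Lebesgue-a.e. `y ∈ [0,r]`, then for every
`ε > 0` there is `γ > 0` such that the union of the superlevel sets
`{y ∈ [0,r] : φ_t(κ i y, η i y) ≥ 1 - γ}` has Lebesgue measure less than `ε`. -/
theorem stmt_2 {𝒳 : Type*} [MeasurableSpace 𝒳] [StandardBorelSpace 𝒳]
    (r t : ℝ) (hr : 0 < r) (ht : t ∈ Set.Ioo (0 : ℝ) 1)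
    {I : Type*} [Fintype I]
    (κ η : I → ProbabilityTheory.Kernel ℝ 𝒳)
    [∀ i, ProbabilityTheory.IsMarkovKernel (κ i)]
    [∀ i, ProbabilityTheory.IsMarkovKernel (η i)]
    (hne : ∀ i, ∀ᵐ y ∂(volume.restrict (Set.Icc (0 : ℝ) r)), κ i y ≠ η i y) :
    ∀ ε : ℝ, 0 < ε → ∃ γ : ℝ, 0 < γ ∧
      volume (⋃ i, {y ∈ Set.Icc (0 : ℝ) r | 1 - γ ≤ phiT t (κ i y) (η i y)})
        < ENNReal.ofReal ε :=
  stmt_2_general r t ht κ η hne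
end

section
/- Let (Ω, ℱ, ℙ) be a probability space, let (X_ℓ)_{ℓ≥1} be an i.i.d. sequence of real random variables, and let N : Ω → ℕ be a random variable independent of the whole sequence (X_ℓ)_{ℓ≥1}. Let c ∈ ℝ, κ ≥ 0, and M ∈ ℕ, and suppose that ℙ(Σ_{ℓ=1}^{m} X_ℓ ≥ c) ≥ e^{−κ·m} for every integer m ≥ M. Then ℙ(Σ_{ℓ=1}^{N} X_ℓ ≥ c) ≥ E[e^{−κ·N}] − ℙ(N < M). -/
open MeasureTheory ProbabilityTheory

/-!
Split according to the value of `N`. By independence, conditioning on `N = m` leaves the law of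
the partial sums unchanged, so `ℙ(S_N ≥ c) = E[q(N)]` with `q m = ℙ(S_m ≥ c)`. Pointwise,
`e^{-κ n} ≤ q n + 𝟙{n < M}` (using `e^{-κ n} ≤ 1` below `M`), and integrating gives the claim.
-/

open scoped ENNReal

section RandomIndex

variable {Ω α β : Type*} [MeasurableSpace Ω] [MeasurableSpace α] [MeasurableSpace β]
  [Countable α] [MeasurableSingletonClass α] {μ : Measure Ω} {N : Ω → α}

lemma lintegral_comp_eq_tsum (hN : Measurable N) (f : α → ℝ≥0∞) :
    ∫⁻ ω, f (N ω) ∂μ = ∑' a, f a * μ (N ⁻¹' {a}) := by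
  rw [← lintegral_map (measurable_of_countable f) hN, lintegral_countable']
  simp_rw [Measure.map_apply hN (measurableSet_singleton _)]

lemma measure_setOf_mem_comp_eq_tsum (hN : Measurable N) {E : α → Set Ω}
    (hE : ∀ a, MeasurableSet (E a)) :
    μ {ω | ω ∈ E (N ω)} = ∑' a, μ (N ⁻¹' {a} ∩ E a) := by
  have hunion : {ω | ω ∈ E (N ω)} = ⋃ a, N ⁻¹' {a} ∩ E a := by
    ext ω
    simp
  have hdisj : Pairwise (Function.onFun Disjoint fun a => N ⁻¹' {a} ∩ E a) :=
    fun a b hab => Set.disjoint_left.mpr fun ω ha hb => hab (ha.1.symm.trans hb.1)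
  rw [hunion, measure_iUnion hdisj fun a => (hN (measurableSet_singleton a)).inter (hE a)]

lemma ProbabilityTheory.IndepFun.measure_setOf_mem_comp_eq_lintegral {Y : Ω → β}
    (hNY : IndepFun N Y μ) (hN : Measurable N) (hY : Measurable Y) {B : α → Set β}
    (hB : ∀ a, MeasurableSet (B a)) :
    μ {ω | Y ω ∈ B (N ω)} = ∫⁻ ω, μ (Y ⁻¹' B (N ω)) ∂μ := by
  rw [lintegral_comp_eq_tsum (f := fun a => μ (Y ⁻¹' B a)) hN]
  refine (measure_setOf_mem_comp_eq_tsum (E := fun a => Y ⁻¹' B a) hN fun a => hY (hB a)).trans ?_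
  congr 1 with a
  rw [hNY.measure_inter_preimage_eq_mul _ _ (measurableSet_singleton a) (hB a), mul_comm]

end RandomIndex

theorem stmt_8_general {Ω : Type*} [MeasurableSpace Ω] (P : Measure Ω)
    (X : ℕ → Ω → ℝ) (hX : ∀ ℓ, Measurable (X ℓ))
    (N : Ω → ℕ) (hN : Measurable N)
    (hNind : IndepFun N (fun ω i => X i ω) P)
    (c κ : ℝ) (hκ : 0 ≤ κ) (M : ℕ)
    (h : ∀ m : ℕ, M ≤ m →
      ENNReal.ofReal (Real.exp (-κ * m)) ≤ P {ω | c ≤ ∑ ℓ ∈ Finset.range m, X ℓ ω}) :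
    (∫⁻ ω, ENNReal.ofReal (Real.exp (-κ * N ω)) ∂P) - P {ω | N ω < M}
      ≤ P {ω | c ≤ ∑ ℓ ∈ Finset.range (N ω), X ℓ ω} := by
  set q : ℕ → ℝ≥0∞ := fun m => P {ω | c ≤ ∑ ℓ ∈ Finset.range m, X ℓ ω}
  have hfreeze : P {ω | c ≤ ∑ ℓ ∈ Finset.range (N ω), X ℓ ω} = ∫⁻ ω, q (N ω) ∂P :=
    hNind.measure_setOf_mem_comp_eq_lintegral (B := fun m => {x | c ≤ ∑ ℓ ∈ Finset.range m, x ℓ})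
      hN (measurable_pi_lambda _ hX) fun m =>
        measurableSet_le measurable_const (Finset.measurable_sum _ fun ℓ _ => measurable_pi_apply ℓ)
  have hpointwise : ∀ ω, ENNReal.ofReal (Real.exp (-κ * N ω))
      ≤ q (N ω) + {ω | N ω < M}.indicator 1 ω := by
    intro ω
    by_cases hω : N ω < M
    · rw [Set.indicator_of_mem (show ω ∈ {ω | N ω < M} from hω), Pi.one_apply]
      refine le_add_left (ENNReal.ofReal_le_one.mpr (Real.exp_le_one_iff.mpr ?_))
      have := mul_nonneg hκ (Nat.cast_nonneg (N ω))
      linarith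
    · exact le_add_right (h _ (not_lt.mp hω))
  rw [tsub_le_iff_right, hfreeze]
  calc ∫⁻ ω, ENNReal.ofReal (Real.exp (-κ * N ω)) ∂P
      ≤ ∫⁻ ω, q (N ω) + {ω | N ω < M}.indicator 1 ω ∂P := lintegral_mono hpointwise
    _ = ∫⁻ ω, q (N ω) ∂P + P {ω | N ω < M} := by
      rw [lintegral_add_left (f := fun ω => q (N ω)) ((measurable_of_countable q).comp hN),
        lintegral_indicator_one (measurableSet_lt hN measurable_const)]

/-- Lower bound for a random sum (eq:0_is_FlipBad_simplified): if the i.i.d. partial sums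
satisfy `ℙ(Σ_{ℓ<m} X ℓ ≥ c) ≥ e^{-κ m}` for all `m ≥ M`, and `N` is independent of the whole
sequence, then `ℙ(Σ_{ℓ<N} X ℓ ≥ c) ≥ E[e^{-κ N}] - ℙ(N < M)`. -/
theorem stmt_8 {Ω : Type*} [MeasurableSpace Ω] (P : Measure Ω) [IsProbabilityMeasure P]
    (X : ℕ → Ω → ℝ) (hX : ∀ ℓ, Measurable (X ℓ))
    (hident : ∀ ℓ, IdentDistrib (X ℓ) (X 0) P P)
    (hiid : iIndepFun X P)
    (N : Ω → ℕ) (hN : Measurable N)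
    (hNind : IndepFun N (fun ω i => X i ω) P)
    (c κ : ℝ) (hκ : 0 ≤ κ) (M : ℕ)
    (h : ∀ m : ℕ, M ≤ m →
      ENNReal.ofReal (Real.exp (-κ * m)) ≤ P {ω | c ≤ ∑ ℓ ∈ Finset.range m, X ℓ ω}) :
    (∫⁻ ω, ENNReal.ofReal (Real.exp (-κ * N ω)) ∂P) - P {ω | N ω < M}
      ≤ P {ω | c ≤ ∑ ℓ ∈ Finset.range (N ω), X ℓ ω} :=
  stmt_8_general P X hX N hN hNind c κ hκ M h
end

section
/- Let a ≥ 1, κ > 0, and β ∈ (0, 1/2) satisfy a·(1 − e^{−κ}) ≤ 1 − 2β. Let (X_ℓ)_{ℓ≥1} be an i.i.d. sequence of real random variables, let c ∈ ℝ, and let M ∈ ℕ be such that ℙ(Σ_{ℓ=1}^{m} X_ℓ ≥ c) ≥ e^{−κ·m} for every integer m ≥ M. For each L > 0 let N_L be a random variable with distribution Pois(a·L), independent of the sequence (X_ℓ)_{ℓ≥1}. Then there exists L₀ > 0 such that for all L ≥ L₀, ℙ(Σ_{ℓ=1}^{N_L} X_ℓ ≥ c) ≥ e^{(−1+β)·L}.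 -/
/-! Write `S_m = ∑_{ℓ < m} X_ℓ`. Conditioning on `N = m` and using independence,
`ℙ(S_N ≥ c) ≥ ∑_{m ≥ M} ℙ(N = m) e^{-κm}`.
Summed over all `m`, this is the Poisson generating function `e^{-aL(1 - e^{-κ})}`, which is at
least `e^{-(1-2β)L}`; the missing terms `m < M` have mass `O(L^M e^{-L})` since `a ≥ 1`, which is
negligible against the gap `e^{-(1-2β)L} - e^{-(1-β)L}`. -/

open MeasureTheory ProbabilityTheory Real Filter Finset
open scoped NNReal ENNReal

lemma ProbabilityTheory.IndepFun.measure_mem_index_eq_tsum {Ω β : Type*} [MeasurableSpace Ω]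
    [MeasurableSpace β] {P : Measure Ω} {N : Ω → ℕ} {Y : Ω → β} (hN : Measurable N)
    (hY : Measurable Y) (hind : IndepFun N Y P) {T : ℕ → Set β} (hT : ∀ m, MeasurableSet (T m)) :
    P {ω | Y ω ∈ T (N ω)} = ∑' m, P (N ⁻¹' {m}) * P (Y ⁻¹' T m) := by
  have hunion : {ω | Y ω ∈ T (N ω)} = ⋃ m, N ⁻¹' {m} ∩ Y ⁻¹' T m := by
    ext ω; simp
  rw [hunion, measure_iUnion]
  · exact tsum_congr fun m ↦
      hind.measure_inter_preimage_eq_mul _ _ (measurableSet_singleton m) (hT m)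
  · intro m n hmn
    exact Set.disjoint_left.2 fun ω hm hn ↦ hmn (hm.1.symm.trans hn.1)
  · exact fun m ↦ (hN (measurableSet_singleton m)).inter (hY (hT m))

lemma hasSum_poissonMeasure_real_mul_exp (r : ℝ≥0) (κ : ℝ) :
    HasSum (fun n : ℕ ↦ (poissonMeasure r).real {n} * exp (-κ * n))
      (exp (-(r * (1 - exp (-κ))))) := by
  have h := (NormedSpace.expSeries_div_hasSum_exp (r * exp (-κ) : ℝ)).mul_left (exp (-r))
  rw [← exp_eq_exp_ℝ, ← exp_add] at h
  rw [show -(r * (1 - exp (-κ))) = -r + r * exp (-κ) by ring]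
  refine h.congr_fun fun n ↦ ?_
  rw [poissonMeasure_real_singleton, mul_comm (-κ), exp_nat_mul, mul_pow]
  ring

lemma sum_range_poissonMeasure_real_le {r : ℝ≥0} (hr : 1 ≤ r) (M : ℕ) :
    ∑ n ∈ range M, (poissonMeasure r).real {n} ≤ M * r ^ M * exp (-r) := by
  have hterm : ∀ n ∈ range M, (poissonMeasure r).real {n} ≤ r ^ M * exp (-r) := by
    intro n hn
    rw [poissonMeasure_real_singleton, mul_comm, mul_div_assoc]
    gcongr
    · exact (mem_range.1 hn).le
    · exact div_le_self (by positivity) (Nat.one_le_cast.2 n.factorial_pos)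
  simpa [mul_assoc] using sum_le_card_nsmul _ _ _ hterm

lemma ofReal_exp_sub_le_tsum_poissonMeasure_mul_exp {r : ℝ≥0} (hr : 1 ≤ r) {κ : ℝ} (hκ : 0 ≤ κ)
    (M : ℕ) :
    ENNReal.ofReal (exp (-(r * (1 - exp (-κ)))) - M * r ^ M * exp (-r)) ≤
      ∑' k, poissonMeasure r {k + M} * ENNReal.ofReal (exp (-κ * ↑(k + M))) := by
  set f : ℕ → ℝ := fun n ↦ (poissonMeasure r).real {n} * exp (-κ * n)
  have hf : HasSum f _ := hasSum_poissonMeasure_real_mul_exp r κ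
  have hhead : ∑ n ∈ range M, f n ≤ M * r ^ M * exp (-r) := by
    refine (sum_le_sum fun n _ ↦ ?_).trans (sum_range_poissonMeasure_real_le hr M)
    exact mul_le_of_le_one_right measureReal_nonneg (exp_le_one_iff.2 (by nlinarith))
  have hsplit := hf.summable.sum_add_tsum_nat_add M
  calc ENNReal.ofReal (exp (-(r * (1 - exp (-κ)))) - M * r ^ M * exp (-r))
      ≤ ENNReal.ofReal (∑' k, f (k + M)) :=
        ENNReal.ofReal_le_ofReal (by linarith [hf.tsum_eq])
    _ = ∑' k, ENNReal.ofReal (f (k + M)) :=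
        ENNReal.ofReal_tsum_of_nonneg (fun _ ↦ by positivity)
          ((summable_nat_add_iff M).2 hf.summable)
    _ = _ := by
        congr 1 with k
        rw [ENNReal.ofReal_mul measureReal_nonneg, ofReal_measureReal]

lemma tsum_mul_le_measure_le_sum_range {Ω : Type*} [MeasurableSpace Ω] {P : Measure Ω}
    {X : ℕ → Ω → ℝ} (hX : ∀ ℓ, Measurable (X ℓ)) {N : Ω → ℕ} (hN : Measurable N)
    (hind : IndepFun N (fun ω i ↦ X i ω) P) {ν : Measure ℕ} (hlaw : P.map N = ν)
    {w : ℕ → ℝ≥0∞} {c : ℝ} {M : ℕ}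
    (h : ∀ m, M ≤ m → w m ≤ P {ω | c ≤ ∑ ℓ ∈ range m, X ℓ ω}) :
    ∑' k, ν {k + M} * w (k + M) ≤ P {ω | c ≤ ∑ ℓ ∈ range (N ω), X ℓ ω} := by
  have hT : ∀ m, MeasurableSet {y : ℕ → ℝ | c ≤ ∑ ℓ ∈ range m, y ℓ} := fun m ↦
    measurableSet_le measurable_const (Finset.measurable_sum _ fun ℓ _ ↦ measurable_pi_apply ℓ)
  calc ∑' k, ν {k + M} * w (k + M)
      ≤ ∑' k, P (N ⁻¹' {k + M}) * P {ω | c ≤ ∑ ℓ ∈ range (k + M), X ℓ ω} := by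
        refine ENNReal.tsum_le_tsum fun k ↦ ?_
        rw [← hlaw, Measure.map_apply hN (measurableSet_singleton _)]
        exact mul_le_mul_right (h _ le_add_self) _
    _ ≤ ∑' m, P (N ⁻¹' {m}) * P {ω | c ≤ ∑ ℓ ∈ range m, X ℓ ω} :=
        ENNReal.tsum_comp_le_tsum_of_injective (add_left_injective M) _
    _ = P {ω | c ≤ ∑ ℓ ∈ range (N ω), X ℓ ω} :=
        (hind.measure_mem_index_eq_tsum hN (measurable_pi_lambda _ hX) hT).symm

lemma eventually_mul_pow_mul_exp_neg_add_exp_le (C : ℝ) (n : ℕ) {β : ℝ} (hβ : 0 < β) :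
    ∀ᶠ L in atTop, C * L ^ n * exp (-L) + exp ((-1 + β) * L) ≤ exp ((-1 + 2 * β) * L) := by
  have hsmall : ∀ᶠ L in atTop, C * (L ^ n * exp (-β * L)) ≤ 1 := by
    have h := (tendsto_rpow_mul_exp_neg_mul_atTop_nhds_zero n β hβ).const_mul C
    simp only [rpow_natCast, mul_zero] at h
    exact h.eventually (eventually_le_nhds one_pos)
  have hlarge : ∀ᶠ L in atTop, 2 ≤ exp (β * L) :=
    (tendsto_exp_atTop.comp (tendsto_id.const_mul_atTop hβ)).eventually_ge_atTop 2
  filter_upwards [hsmall, hlarge] with L hsmall hlarge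
  have h1 : exp (-L) = exp (-β * L) * exp ((-1 + β) * L) := by rw [← exp_add]; ring_nf
  have h2 : exp ((-1 + 2 * β) * L) = exp (β * L) * exp ((-1 + β) * L) := by
    rw [← exp_add]; ring_nf
  rw [h1, h2]
  nlinarith [exp_pos ((-1 + β) * L)]

theorem stmt_9_general {Ω : Type*} [MeasurableSpace Ω] (P : Measure Ω)
    (a κ β : ℝ) (ha : 1 ≤ a) (hκ : 0 < κ) (hβ : β ∈ Set.Ioo (0 : ℝ) (1 / 2))
    (hcond : a * (1 - Real.exp (-κ)) ≤ 1 - 2 * β)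
    (X : ℕ → Ω → ℝ) (hX : ∀ ℓ, Measurable (X ℓ))
    (c : ℝ) (M : ℕ)
    (h : ∀ m : ℕ, M ≤ m →
      ENNReal.ofReal (Real.exp (-κ * m)) ≤ P {ω | c ≤ ∑ ℓ ∈ Finset.range m, X ℓ ω})
    (N : ℝ → Ω → ℕ) (hN : ∀ L, Measurable (N L))
    (hNlaw : ∀ L : ℝ, 0 < L → Measure.map (N L) P = poissonMeasure (a * L).toNNReal)
    (hNind : ∀ L : ℝ, 0 < L → IndepFun (N L) (fun ω i => X i ω) P) :
    ∃ L₀ : ℝ, 0 < L₀ ∧ ∀ L : ℝ, L₀ ≤ L →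
      ENNReal.ofReal (Real.exp ((-1 + β) * L))
        ≤ P {ω | c ≤ ∑ ℓ ∈ Finset.range (N L ω), X ℓ ω} := by
  obtain ⟨L₁, hL₁⟩ :=
    (eventually_mul_pow_mul_exp_neg_add_exp_le (M * a ^ M) M hβ.1).exists_forall_of_atTop
  refine ⟨max L₁ 1, by positivity, fun L hL ↦ ?_⟩
  have hL1 : 1 ≤ L := le_of_max_le_right hL
  set r := (a * L).toNNReal
  have hr : (r : ℝ) = a * L := Real.coe_toNNReal _ (by positivity)
  have hr1 : 1 ≤ r := by rw [← NNReal.coe_le_coe, hr, NNReal.coe_one]; nlinarith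
  have hmain : exp ((-1 + β) * L) ≤ exp (-(r * (1 - exp (-κ)))) - M * r ^ M * exp (-r) := by
    have hmean : exp ((-1 + 2 * β) * L) ≤ exp (-(r * (1 - exp (-κ)))) :=
      exp_le_exp.2 (by rw [hr]; nlinarith)
    have hhead : (M : ℝ) * r ^ M * exp (-r) ≤ M * a ^ M * L ^ M * exp (-L) := by
      rw [hr, mul_pow, ← mul_assoc]; gcongr; nlinarith
    linarith [hL₁ L (le_of_max_le_left hL)]
  calc ENNReal.ofReal (exp ((-1 + β) * L))
      ≤ ENNReal.ofReal (exp (-(r * (1 - exp (-κ)))) - M * r ^ M * exp (-r)) :=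
        ENNReal.ofReal_le_ofReal hmain
    _ ≤ ∑' k, poissonMeasure r {k + M} * ENNReal.ofReal (exp (-κ * ↑(k + M))) :=
        ofReal_exp_sub_le_tsum_poissonMeasure_mul_exp hr1 hκ.le M
    _ ≤ _ := tsum_mul_le_measure_le_sum_range hX (hN L) (hNind L (by positivity))
        (hNlaw L (by positivity)) h

/-- Probabilistic core of Lemma `impossibility_lemma_1`: under `a (1 - e^{-κ}) ≤ 1 - 2β` with
`a ≥ 1`, `κ > 0`, `β ∈ (0, 1/2)`, a Cramér-type lower bound `ℙ(Σ_{ℓ<m} X ℓ ≥ c) ≥ e^{-κ m}`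
for `m ≥ M`, and `N L ~ Pois(a L)` independent of the sequence, there is `L₀ > 0` such that
`ℙ(Σ_{ℓ < N L} X ℓ ≥ c) ≥ e^{(-1+β) L}` for all `L ≥ L₀`. -/
theorem stmt_9 {Ω : Type*} [MeasurableSpace Ω] (P : Measure Ω) [IsProbabilityMeasure P]
    (a κ β : ℝ) (ha : 1 ≤ a) (hκ : 0 < κ) (hβ : β ∈ Set.Ioo (0 : ℝ) (1 / 2))
    (hcond : a * (1 - Real.exp (-κ)) ≤ 1 - 2 * β)
    (X : ℕ → Ω → ℝ) (hX : ∀ ℓ, Measurable (X ℓ))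
    (hident : ∀ ℓ, IdentDistrib (X ℓ) (X 0) P P)
    (hiid : iIndepFun X P)
    (c : ℝ) (M : ℕ)
    (h : ∀ m : ℕ, M ≤ m →
      ENNReal.ofReal (Real.exp (-κ * m)) ≤ P {ω | c ≤ ∑ ℓ ∈ Finset.range m, X ℓ ω})
    (N : ℝ → Ω → ℕ) (hN : ∀ L, Measurable (N L))
    (hNlaw : ∀ L : ℝ, 0 < L → Measure.map (N L) P = poissonMeasure (a * L).toNNReal)
    (hNind : ∀ L : ℝ, 0 < L → IndepFun (N L) (fun ω i => X i ω) P) :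
    ∃ L₀ : ℝ, 0 < L₀ ∧ ∀ L : ℝ, L₀ ≤ L →
      ENNReal.ofReal (Real.exp ((-1 + β) * L))
        ≤ P {ω | c ≤ ∑ ℓ ∈ Finset.range (N L ω), X ℓ ω} :=
  stmt_9_general P a κ β ha hκ hβ hcond X hX c M h N hN hNlaw hNind
end
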